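/- There exists K > 0 such that for all z ∈ (z_max, -z_max) with |ψ(z)| < ρ ψ_max, one has |ψ'(z)| > 1/K, where ψ(z) = -((β^2-1)z + βz^2 + z^3/3), z_max = 1-β, ψ_max = (1/3)(β-1)^2(β+2), and ρ ∈ (0,1) is fixed, for β ∈ (1,2] bounded away from 1. -/

import Mathlib

/-!
Measure `z` from the left endpoint: `u = z - z_max = z + β - 1 ∈ (0, 2(β - 1)) ⊆ (0, 2)`.
Then `ψ'(z) = -u(u + 2)` and `ψ_max - ψ(z) = u²(u + 3)/3`, so the sublevel condition forces
`u²(u + 3)/3 > (1 - ρ) ψ_max ≥ (1 - ρ) δ²`. As `u²(u + 3) ≤ 10u` for `u ≤ 2`, this bounds `u`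
below by a multiple of `(1 - ρ) δ²`, and `|ψ'(z)| ≥ 2u` inherits the bound.
-/

noncomputable def psi (β z : ℝ) : ℝ := -((β^2 - 1) * z + β * z^2 + z^3/3)

noncomputable def psiMax (β : ℝ) : ℝ := (1/3) * (β - 1)^2 * (β + 2)

theorem hasDerivAt_psi (β z : ℝ) :
    HasDerivAt (psi β) (-((z + β - 1) * (z + β - 1 + 2))) z := by
  have h := ((((hasDerivAt_id z).const_mul (β^2 - 1)).add
    ((hasDerivAt_pow 2 z).const_mul β)).add ((hasDerivAt_pow 3 z).div_const 3)).neg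
  exact h.congr_deriv (by simp only [Nat.cast_ofNat]; ring)

theorem psiMax_sub_psi (β z : ℝ) :
    psiMax β - psi β z = (z + β - 1)^2 * (z + β - 1 + 3) / 3 := by
  unfold psiMax psi; ring

theorem sq_le_psiMax {δ β : ℝ} (hδ : 0 ≤ δ) (hβ : 1 + δ ≤ β) : δ^2 ≤ psiMax β := by
  unfold psiMax
  have hsq : δ^2 ≤ (β - 1)^2 := pow_le_pow_left₀ hδ (by linarith) 2
  nlinarith [sq_nonneg (β - 1)]

theorem lt_mul_add_two_of_lt_cubic {u c : ℝ} (hu0 : 0 < u) (hu2 : u ≤ 2)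
    (h : c < u^2 * (u + 3) / 3) : 3 * c / 5 < u * (u + 2) := by
  have hcubic : u^2 * (u + 3) ≤ 10 * u := by nlinarith [mul_nonneg hu0.le (sub_nonneg.2 hu2)]
  nlinarith

theorem psi_deriv_lower_bound_general (δ ρ : ℝ) (hδ : 0 < δ)
    (hρ1 : ρ < 1) :
    ∃ K > (0:ℝ), ∀ β : ℝ, 1 + δ ≤ β → β ≤ 2 →
      ∀ z : ℝ, 1 - β < z → z < β - 1 →
        |(fun z : ℝ => -((β^2 - 1) * z + β * z^2 + z^3/3)) z|
          < ρ * ((1/3) * (β - 1)^2 * (β + 2)) →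
        1 / K < |deriv (fun z : ℝ => -((β^2 - 1) * z + β * z^2 + z^3/3)) z| := by
  have hρ : 0 < 1 - ρ := by linarith
  refine ⟨5 / (3 * (1 - ρ) * δ^2), by positivity, fun β hβδ hβ2 z hz0 hz1 hsub => ?_⟩
  change |psi β z| < ρ * psiMax β at hsub
  change _ < |deriv (psi β) z|
  set u := z + β - 1
  have hu0 : 0 < u := by linarith
  have hgap : (1 - ρ) * δ^2 < u^2 * (u + 3) / 3 := by
    have hmax := sq_le_psiMax hδ.le hβδ
    rw [← psiMax_sub_psi]
    nlinarith [le_abs_self (psi β z)]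
  rw [(hasDerivAt_psi β z).deriv, abs_neg, abs_of_pos (by positivity), one_div_div]
  calc 3 * (1 - ρ) * δ^2 / 5 = 3 * ((1 - ρ) * δ^2) / 5 := by ring
    _ < u * (u + 2) := lt_mul_add_two_of_lt_cubic hu0 (by linarith) hgap

/-- Remark (rem-ref): for `β ∈ [1+δ, 2]`, uniformly on the sublevel set
`{z ∈ (z_max, -z_max) : |ψ(z)| < ρ ψ_max}` the derivative of `ψ` is bounded away
from zero: there exists `K > 0` with `|ψ'(z)| > 1/K`. -/
theorem psi_deriv_lower_bound (δ ρ : ℝ) (hδ : 0 < δ) (hδ2 : 1 + δ ≤ 2)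
    (hρ0 : 0 < ρ) (hρ1 : ρ < 1) :
    ∃ K > (0:ℝ), ∀ β : ℝ, 1 + δ ≤ β → β ≤ 2 →
      ∀ z : ℝ, 1 - β < z → z < β - 1 →
        |(fun z : ℝ => -((β^2 - 1) * z + β * z^2 + z^3/3)) z|
          < ρ * ((1/3) * (β - 1)^2 * (β + 2)) →
        1 / K < |deriv (fun z : ℝ => -((β^2 - 1) * z + β * z^2 + z^3/3)) z| :=
  psi_deriv_lower_bound_general δ ρ hδ hρ1
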